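/- For a real vector z ∈ ℝ^M, the sum of pairwise absolute differences ∑_{1≤i<j≤M} |z_i − z_j| equals ∑_{q=1}^{M−1} min_{t∈ℝ} ( 2q·t + 2·∑_{i=1}^M max(z_i − t, 0) ) − (M−1)·∑_{i=1}^M z_i. -/

import Mathlib

/-!
For any `q`-element set `s` of indices, `∑_{i ∈ s} z_i ≤ q t + ∑_i max (z_i - t) 0`, with equality
when `t` separates `s` from its complement; so the inner minimum is the sum of the `q` largest
entries, attained at the `q`-th largest one. Both sides are invariant under permuting `z`, so we may
assume `z` sorted. Then `z_i` lies among the `q` largest entries for exactly `i` values of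
`q ∈ [1, M - 1]`, and it is the larger entry in exactly `i` of the pairs, which makes both sides
equal to `2 ∑_i i z_i - (M - 1) ∑_i z_i`.
-/

open Finset

section PosPart

variable {ι : Type*} [Fintype ι]

lemma sum_le_card_mul_add_sum_max_sub (z : ι → ℝ) (s : Finset ι) (t : ℝ) :
    ∑ i ∈ s, z i ≤ #s * t + ∑ i, max (z i - t) 0 :=
  calc ∑ i ∈ s, z i ≤ ∑ i ∈ s, (t + max (z i - t) 0) :=
        sum_le_sum fun i _ => by linarith [le_max_left (z i - t) 0]
    _ = #s * t + ∑ i ∈ s, max (z i - t) 0 := by rw [sum_add_distrib, sum_const, nsmul_eq_mul]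
    _ ≤ #s * t + ∑ i, max (z i - t) 0 := (add_le_add_iff_left _).2 <|
        sum_le_sum_of_subset_of_nonneg (subset_univ s) fun i _ _ => le_max_right (z i - t) 0

lemma card_mul_add_sum_max_sub_eq (z : ι → ℝ) (s : Finset ι) (t : ℝ)
    (h_mem : ∀ i ∈ s, t ≤ z i) (h_not_mem : ∀ i ∉ s, z i ≤ t) :
    #s * t + ∑ i, max (z i - t) 0 = ∑ i ∈ s, z i := by
  have h_max : ∑ i, max (z i - t) 0 = ∑ i ∈ s, (z i - t) := by
    rw [← sum_subset (subset_univ s) fun i _ hi => max_eq_right (by linarith [h_not_mem i hi])]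
    exact sum_congr rfl fun i hi => max_eq_left (by linarith [h_mem i hi])
  rw [h_max, sum_sub_distrib, sum_const, nsmul_eq_mul]
  ring

end PosPart

section Pairs

variable {ι : Type*} [Fintype ι] [LinearOrder ι]

lemma two_mul_sum_filter_lt {f : ι → ι → ℝ} (h_symm : ∀ i j, f i j = f j i)
    (h_diag : ∀ i, f i i = 0) :
    2 * ∑ p ∈ univ.filter (fun p : ι × ι => p.1 < p.2), f p.1 p.2 = ∑ i, ∑ j, f i j := by
  rw [sum_filter, two_mul]
  nth_rewrite 2 [← Equiv.sum_comp (Equiv.prodComm ι ι)]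
  rw [← sum_add_distrib, Fintype.sum_prod_type]
  refine sum_congr rfl fun i _ => sum_congr rfl fun j _ => ?_
  rcases lt_trichotomy i j with h | rfl | h
  · simp [h, h.not_gt]
  · simp [h_diag]
  · simp [h, h.not_gt, h_symm i j]

lemma sum_filter_lt_comp_perm {f : ι → ι → ℝ} (h_symm : ∀ i j, f i j = f j i)
    (h_diag : ∀ i, f i i = 0) (σ : Equiv.Perm ι) :
    ∑ p ∈ univ.filter (fun p : ι × ι => p.1 < p.2), f (σ p.1) (σ p.2) =
      ∑ p ∈ univ.filter (fun p : ι × ι => p.1 < p.2), f p.1 p.2 := by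
  have h := two_mul_sum_filter_lt (f := fun i j => f (σ i) (σ j))
    (fun i j => h_symm _ _) (fun i => h_diag _)
  have h_id := two_mul_sum_filter_lt h_symm h_diag
  have h_perm : ∑ i, ∑ j, f (σ i) (σ j) = ∑ i, ∑ j, f i j := by
    rw [← Equiv.sum_comp σ fun i => ∑ j, f i j]
    exact sum_congr rfl fun i _ => Equiv.sum_comp σ (f (σ i))
  linarith

end Pairs

section Fin

variable {M : ℕ}

lemma sum_filter_lt_snd (f : Fin M → ℝ) :
    ∑ p ∈ univ.filter (fun p : Fin M × Fin M => p.1 < p.2), f p.2 =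
      ∑ j : Fin M, ((j : ℕ) : ℝ) * f j := by
  rw [sum_filter, Fintype.sum_prod_type, sum_comm]
  refine sum_congr rfl fun j _ => ?_
  dsimp only
  rw [← sum_filter, filter_gt_eq_Iio, sum_const, Fin.card_Iio, nsmul_eq_mul]

lemma sum_filter_lt_fst (f : Fin M → ℝ) :
    ∑ p ∈ univ.filter (fun p : Fin M × Fin M => p.1 < p.2), f p.1 =
      ∑ i : Fin M, ((M : ℝ) - 1 - (i : ℕ)) * f i := by
  rw [sum_filter, Fintype.sum_prod_type]
  refine sum_congr rfl fun i _ => ?_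
  dsimp only
  rw [← sum_filter, filter_lt_eq_Ioi, sum_const, Fin.card_Ioi, nsmul_eq_mul]
  have := i.isLt
  rw [Nat.cast_sub (by omega), Nat.cast_sub (by omega), Nat.cast_one]

lemma sum_filter_lt_abs_sub_of_monotone {w : Fin M → ℝ} (hw : Monotone w) :
    ∑ p ∈ univ.filter (fun p : Fin M × Fin M => p.1 < p.2), |w p.1 - w p.2| =
      2 * ∑ i : Fin M, ((i : ℕ) : ℝ) * w i - ((M : ℝ) - 1) * ∑ i, w i := by
  have h_abs : ∀ p ∈ univ.filter (fun p : Fin M × Fin M => p.1 < p.2),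
      |w p.1 - w p.2| = w p.2 - w p.1 := fun p hp => by
    rw [abs_sub_comm, abs_of_nonneg (sub_nonneg.2 (hw (mem_filter.1 hp).2.le))]
  rw [sum_congr rfl h_abs, sum_sub_distrib, sum_filter_lt_snd, sum_filter_lt_fst]
  simp only [sub_mul, sum_sub_distrib, ← mul_sum]
  ring

lemma sum_Icc_sum_filter_le (w : Fin M → ℝ) :
    ∑ q ∈ Icc 1 (M - 1), ∑ i ∈ univ.filter (fun i : Fin M => M - q ≤ i.val), w i =
      ∑ i : Fin M, ((i : ℕ) : ℝ) * w i := by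
  rw [sum_comm' (t' := univ) (s' := fun i : Fin M => Icc (M - i) (M - 1))]
  · refine sum_congr rfl fun i _ => ?_
    rw [sum_const, Nat.card_Icc, nsmul_eq_mul]
    have := i.isLt
    congr 2
    omega
  · intro q i
    have := i.isLt
    simp only [mem_Icc, mem_filter, mem_univ, true_and, and_true]
    omega

lemma sInf_eq_two_mul_sum_filter_le {w : Fin M → ℝ} (hw : Monotone w) {q : ℕ}
    (hq : q ∈ Icc 1 (M - 1)) :
    sInf {v : ℝ | ∃ t : ℝ, v = 2 * q * t + 2 * ∑ i : Fin M, max (w i - t) 0} =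
      2 * ∑ i ∈ univ.filter (fun i : Fin M => M - q ≤ i.val), w i := by
  obtain ⟨hq₁, hqM⟩ := mem_Icc.1 hq
  set k : Fin M := ⟨M - q, by omega⟩
  have h_top : univ.filter (fun i : Fin M => M - q ≤ i.val) = Ici k := by
    ext i
    simp [k, Fin.le_def]
  have h_card : (#(Ici k) : ℝ) = q := by
    rw [Fin.card_Ici]
    norm_cast
    simp only [k]
    omega
  rw [h_top]
  refine IsLeast.csInf_eq ⟨⟨w k, ?_⟩, ?_⟩
  · rw [← card_mul_add_sum_max_sub_eq w (Ici k) (w k) (fun i hi => hw (mem_Ici.1 hi))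
      (fun i hi => hw (le_of_lt (by simpa using hi))), h_card]
    ring
  · rintro _ ⟨t, rfl⟩
    have := sum_le_card_mul_add_sum_max_sub w (Ici k) t
    rw [h_card] at this
    linarith

end Fin

lemma sum_filter_lt_abs_sub_eq_sum_sInf_of_monotone {M : ℕ} {w : Fin M → ℝ}
    (hw : Monotone w) :
    ∑ p ∈ univ.filter (fun p : Fin M × Fin M => p.1 < p.2), |w p.1 - w p.2| =
      (∑ q ∈ Icc 1 (M - 1),
        sInf {v : ℝ | ∃ t : ℝ, v = 2 * q * t + 2 * ∑ i : Fin M, max (w i - t) 0}) -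
      ((M : ℝ) - 1) * ∑ i : Fin M, w i := by
  rw [sum_congr rfl fun q hq => sInf_eq_two_mul_sum_filter_le hw hq, ← mul_sum,
    sum_Icc_sum_filter_le, sum_filter_lt_abs_sub_of_monotone hw]

theorem stmt_3_general (M : ℕ) (z : Fin M → ℝ) :
    ∑ p ∈ Finset.univ.filter (fun p : Fin M × Fin M => p.1 < p.2), |z p.1 - z p.2| =
      (∑ q ∈ Finset.Icc 1 (M - 1),
        sInf {v : ℝ | ∃ t : ℝ, v = 2 * q * t + 2 * ∑ i : Fin M, max (z i - t) 0}) -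
      ((M : ℝ) - 1) * ∑ i : Fin M, z i := by
  obtain ⟨σ, hσ⟩ : ∃ σ : Equiv.Perm (Fin M), Monotone (z ∘ σ) := ⟨_, Tuple.monotone_sort z⟩
  have h_max (t : ℝ) : ∑ i, max (z (σ i) - t) 0 = ∑ i, max (z i - t) 0 :=
    Equiv.sum_comp σ fun i => max (z i - t) 0
  have h := sum_filter_lt_abs_sub_eq_sum_sInf_of_monotone hσ
  simp only [Function.comp_apply, Equiv.sum_comp σ z, h_max] at h
  rwa [sum_filter_lt_comp_perm (f := fun i j => |z i - z j|) (fun i j => abs_sub_comm _ _)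
    (fun i => by simp) σ] at h

/-- For `z ∈ ℝ^M` (`M ≥ 2`), the sum of pairwise absolute differences equals
`∑_{q=1}^{M-1} min_{t∈ℝ} (2q·t + 2∑_i max(z_i - t, 0)) - (M-1) ∑_i z_i`. -/
theorem stmt_3 (M : ℕ) (hM : 2 ≤ M) (z : Fin M → ℝ) :
    ∑ p ∈ Finset.univ.filter (fun p : Fin M × Fin M => p.1 < p.2), |z p.1 - z p.2| =
      (∑ q ∈ Finset.Icc 1 (M - 1),
        sInf {v : ℝ | ∃ t : ℝ, v = 2 * q * t + 2 * ∑ i : Fin M, max (z i - t) 0}) -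
      ((M : ℝ) - 1) * ∑ i : Fin M, z i :=
  stmt_3_general M z
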